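/- Let a = 3/4 and set H_exp := (1/4)·(e^{−X} + e^{−X̄}) + (1/2)·e^{−Z}. Then for all cycle configurations ω = (X,X̄,σ,T) and all Z ∈ ℝ: H_left,3/4(Z|ω) − H_exp ≥ Z/4 and H_right,3/4(ω|Z) − H_exp ≥ Z/4. -/
import Mathlib


open MeasureTheory Real

/-- Tree labels A, B, C, D encoded as `Fin 4`. -/
abbrev TreeLabel := Fin 4

def lA : TreeLabel := 0
def lB : TreeLabel := 1
def lC : TreeLabel := 2
def lD : TreeLabel := 3

/-- A cycle configuration `(X, X̄, σ, T)`; the sign `σ` is encoded as a `Bool`. -/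
abbrev CycleConfig := ℝ × ℝ × Bool × TreeLabel

/-- The numerical value of a sign. -/
noncomputable def sgnv (b : Bool) : ℝ := if b then 1 else -1

/-- Real-valued indicator of a proposition. -/
noncomputable def indR (p : Prop) [Decidable p] : ℝ := if p then 1 else 0

/-- `U = (X + X̄)/2`. -/
noncomputable def Uof (ω : CycleConfig) : ℝ := (ω.1 + ω.2.1) / 2

/-- `W = Γ + U' − U`. -/
noncomputable def Wof (ω : CycleConfig) (Γ : ℝ) (ω' : CycleConfig) : ℝ :=
  Γ + Uof ω' - Uof ω

noncomputable def Hln (a : ℝ) (ω : CycleConfig) (Z Γ : ℝ) (ω' : CycleConfig) : ℝ :=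
  ((3 * a + 1) / 2) *
    (Real.log (exp (ω.1 + Wof ω Γ ω' / 2) + exp (ω'.1 - Wof ω Γ ω' / 2) + exp Z)
      + Real.log (exp (ω.2.1 + Wof ω Γ ω' / 2) + exp (ω'.2.1 - Wof ω Γ ω' / 2) + exp Z))

noncomputable def Hlinear (a : ℝ) (ω : CycleConfig) (Z : ℝ) (ω' : CycleConfig) : ℝ :=
  -(a + 1 / 2) * (Uof ω + Uof ω' + Z)

noncomputable def Htree (ω : CycleConfig) (Z Γ : ℝ) (ω' : CycleConfig) : ℝ :=
  (1 / 2) * (indR (ω.2.2.2 = lC) * ω.1 + indR (ω.2.2.2 = lD) * ω.2.1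
      + indR (ω'.2.2.2 = lC) * ω'.1 + indR (ω'.2.2.2 = lD) * ω'.2.1)
    + (indR (ω'.2.2.2 = lB) + indR (ω.2.2.2 = lA)) * Z
    + (1 / 2) * (indR (ω'.2.2.2 = lB) - indR (ω.2.2.2 = lA)) * Wof ω Γ ω'
    - (1 / 2) * (indR (ω.2.2.2 = lA) - indR (ω.2.2.2 = lB)) * Uof ω
    + (1 / 2) * (indR (ω'.2.2.2 = lA) - indR (ω'.2.2.2 = lB)) * Uof ω'

noncomputable def HexpI (ω : CycleConfig) (ω' : CycleConfig) : ℝ :=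
  (1 / 4) * (exp (-ω.1) + exp (-ω.2.1) + exp (-ω'.1) + exp (-ω'.2.1))

noncomputable def HexpII (ω : CycleConfig) (Z Γ : ℝ) (ω' : CycleConfig) : ℝ :=
  (1 / 2) * (sgnv ω.2.2.1 * exp (Wof ω Γ ω' / 4) - sgnv ω'.2.2.1 * exp (-Wof ω Γ ω' / 4)) ^ 2
    * exp (-Z)

/-- The (finite part of the) middle Hamiltonian `H_middle,a,η`. -/
noncomputable def Hmid (a η : ℝ) (ω : CycleConfig) (Z Γ : ℝ) (ω' : CycleConfig) : ℝ :=
  Hln a ω Z Γ ω' + Hlinear a ω Z ω' + Htree ω Z Γ ω' + HexpI ω ω' + HexpII ω Z Γ ω' - η * Γ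

/-- The left boundary Hamiltonian `H_left,a(Z|ω)`. -/
noncomputable def Hleft (a : ℝ) (Z : ℝ) (ω : CycleConfig) : ℝ :=
  a * Real.log (exp ω.2.1 + exp Z)
    + (a + 1 / 2) * (Real.log (exp ω.1 + exp Z) - Uof ω - Z)
    + (1 / 2) * (indR (ω.2.2.2 = lC) * ω.1 + indR (ω.2.2.2 = lD) * ω.2.1)
    + indR (ω.2.2.2 = lB) * Z
    + (1 / 2) * (indR (ω.2.2.2 = lA) - indR (ω.2.2.2 = lB)) * Uof ω
    + (1 / 4) * (exp (-ω.1) + exp (-ω.2.1)) + (1 / 2) * exp (-Z)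
    + Uof ω / 4

/-- The right boundary Hamiltonian `H_right,a(ω|Z)`. -/
noncomputable def Hright (a : ℝ) (ω : CycleConfig) (Z : ℝ) : ℝ :=
  (a + 1 / 2) * (Real.log (exp ω.1 + exp Z) + Real.log (exp ω.2.1 + exp Z) - Uof ω - Z)
    + (1 / 2) * (indR (ω.2.2.2 = lC) * ω.1 + indR (ω.2.2.2 = lD) * ω.2.1)
    + indR (ω.2.2.2 = lA) * Z
    - (1 / 2) * (indR (ω.2.2.2 = lA) - indR (ω.2.2.2 = lB)) * Uof ω
    + (1 / 4) * (exp (-ω.1) + exp (-ω.2.1)) + (1 / 2) * exp (-Z)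
    - Uof ω / 4

private lemma logsum_ge (x z l : ℝ) (h0 : 0 ≤ l) (h1 : l ≤ 1) :
    l * x + (1 - l) * z ≤ Real.log (exp x + exp z) := by
  have hpos : (0:ℝ) < exp x + exp z := by positivity
  rw [Real.le_log_iff_exp_le hpos]
  have hmax : l * x + (1 - l) * z ≤ max x z := by
    have hx := le_max_left x z
    have hz := le_max_right x z
    nlinarith
  calc Real.exp (l * x + (1 - l) * z) ≤ Real.exp (max x z) := Real.exp_le_exp.2 hmax
    _ ≤ exp x + exp z := by
        rcases le_total x z with h | h
        · rw [max_eq_right h]; nlinarith [Real.exp_pos x]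
        · rw [max_eq_left h]; nlinarith [Real.exp_pos z]

/-- Lemma 3.4: at `a = 3/4`, the boundary Hamiltonians minus their exponential part
`H_exp = (1/4)(e^{−X} + e^{−X̄}) + (1/2)e^{−Z}` are bounded below by `Z/4`. -/
theorem boundary_hamiltonian_bound_at_three_quarters (ω : CycleConfig) (Z : ℝ) :
    Z / 4 ≤ Hleft (3 / 4) Z ω
        - ((1 / 4) * (exp (-ω.1) + exp (-ω.2.1)) + (1 / 2) * exp (-Z)) ∧
    Z / 4 ≤ Hright (3 / 4) ω Z
        - ((1 / 4) * (exp (-ω.1) + exp (-ω.2.1)) + (1 / 2) * exp (-Z)) := by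
  obtain ⟨X, Y, s, T⟩ := ω
  fin_cases T <;>
    simp only [Hleft, Hright, Uof, indR, lA, lB, lC, lD, Fin.isValue] <;>
    norm_num [Fin.ext_iff, show ((3 : Fin 4) : ℕ) = 3 from rfl] <;> constructor
  · linarith [logsum_ge X Z (1/5) (by norm_num) (by norm_num),
      logsum_ge Y Z (1/3) (by norm_num) (by norm_num)]
  · linarith [logsum_ge X Z (4/5) (by norm_num) (by norm_num),
      logsum_ge Y Z (4/5) (by norm_num) (by norm_num)]
  · linarith [logsum_ge X Z (3/5) (by norm_num) (by norm_num),
      logsum_ge Y Z 1 (by norm_num) (by norm_num)]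
  · linarith [logsum_ge X Z (2/5) (by norm_num) (by norm_num),
      logsum_ge Y Z (2/5) (by norm_num) (by norm_num)]
  · linarith [logsum_ge X Z 0 (by norm_num) (by norm_num),
      logsum_ge Y Z (2/3) (by norm_num) (by norm_num)]
  · linarith [logsum_ge X Z (1/5) (by norm_num) (by norm_num),
      logsum_ge Y Z (3/5) (by norm_num) (by norm_num)]
  · linarith [logsum_ge X Z (2/5) (by norm_num) (by norm_num),
      logsum_ge Y Z 0 (by norm_num) (by norm_num)]
  · linarith [logsum_ge X Z (3/5) (by norm_num) (by norm_num),
      logsum_ge Y Z (1/5) (by norm_num) (by norm_num)]
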